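/- The group G_ΔL is a semidirect product F₄ ⋊ F₂ of a free group of rank 4 by a free group of rank 2. Precisely: the normal subgroup N of G_ΔL generated by the images of c₁, c₂, c₃, c₄ is a free group of rank 4 freely generated by these images; the quotient G_ΔL/N is a free group of rank 2 freely generated by the images of ℓ₁ and ℓ₂; and the short exact sequence 1 → N → G_ΔL → G_ΔL/N → 1 splits. -/

import Mathlib

/-- Relations of `G_ΔL`; generators `c₁,c₂,c₃,c₄,ℓ₁,ℓ₂,ℓ∞` are `0,…,6`. -/
def GdLrels : Set (FreeGroup (Fin 7)) :=
  let c₁ : FreeGroup (Fin 7) := FreeGroup.of 0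
  let c₂ : FreeGroup (Fin 7) := FreeGroup.of 1
  let c₃ : FreeGroup (Fin 7) := FreeGroup.of 2
  let c₄ : FreeGroup (Fin 7) := FreeGroup.of 3
  let l₁ : FreeGroup (Fin 7) := FreeGroup.of 4
  let l₂ : FreeGroup (Fin 7) := FreeGroup.of 5
  let li : FreeGroup (Fin 7) := FreeGroup.of 6
  { l₂ * c₁ * l₂⁻¹ * c₁⁻¹,
    l₂⁻¹ * c₂ * l₂ * ((c₂ * c₃ * c₄) * c₃ * (c₂ * c₃ * c₄)⁻¹)⁻¹,
    l₂⁻¹ * c₃ * l₂ * ((c₂ * c₃) * c₄ * (c₂ * c₃)⁻¹)⁻¹,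
    l₂⁻¹ * c₄ * l₂ * c₂⁻¹,
    l₁⁻¹ * c₁ * l₁ * ((c₁ * c₂) * c₃ * (c₁ * c₂)⁻¹)⁻¹,
    l₁⁻¹ * c₂ * l₁ * ((c₁ * c₂) * c₁ * (c₁ * c₂)⁻¹)⁻¹,
    l₁⁻¹ * c₃ * l₁ * (c₁ * c₂ * c₁⁻¹)⁻¹,
    l₁ * c₄ * l₁⁻¹ * c₄⁻¹,
    c₁ * c₂ * c₃ * c₄ * l₁ * l₂ * li }

/-- `G_ΔL`, the group with generators `c₁,c₂,c₃,c₄,ℓ₁,ℓ₂,ℓ∞` and relations (R1)–(R9). -/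
abbrev GdL := PresentedGroup GdLrels

/-- The normal subgroup of `G_ΔL` generated by (the images of) `c₁, c₂, c₃, c₄`. -/
def NdL : Subgroup GdL :=
  Subgroup.normalClosure
    {PresentedGroup.of 0, PresentedGroup.of 1, PresentedGroup.of 2, PresentedGroup.of 3}

instance : NdL.Normal := Subgroup.normalClosure_normal

namespace GdLaux
open FreeGroup SemidirectProduct

abbrev F4 := FreeGroup (Fin 4)
abbrev F2 := FreeGroup (Fin 2)

def X : F4 := .of 0
def Y : F4 := .of 1
def Z : F4 := .of 2
def W : F4 := .of 3

def Amap : F4 →* F4 := FreeGroup.lift ![(X*Y)*Z*(X*Y)⁻¹, (X*Y)*X*(X*Y)⁻¹, X*Y*X⁻¹, W]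
def A'map : F4 →* F4 := FreeGroup.lift ![Z⁻¹*Y*Z, Z⁻¹*Y⁻¹*Z*Y*Z, Z⁻¹*Y⁻¹*X*Y*Z, W]
def Bmap : F4 →* F4 := FreeGroup.lift ![X, (Y*Z*W)*Z*(Y*Z*W)⁻¹, (Y*Z)*W*(Y*Z)⁻¹, Y]
def Cmap : F4 →* F4 := FreeGroup.lift ![X, W, W⁻¹*Z⁻¹*Y*Z*W, W⁻¹*Z⁻¹*Y⁻¹*Z*Y*Z*W]

lemma AA' : Amap.comp A'map = MonoidHom.id F4 := by
  ext i; fin_cases i <;> simp [Amap, A'map, X, Y, Z, W] <;> group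
lemma A'A : A'map.comp Amap = MonoidHom.id F4 := by
  ext i; fin_cases i <;> simp [Amap, A'map, X, Y, Z, W] <;> group
lemma BC : Bmap.comp Cmap = MonoidHom.id F4 := by
  ext i; fin_cases i <;> simp [Bmap, Cmap, X, Y, Z, W] <;> group
lemma CB : Cmap.comp Bmap = MonoidHom.id F4 := by
  ext i; fin_cases i <;> simp [Bmap, Cmap, X, Y, Z, W] <;> group

def αe : MulAut F4 := MonoidHom.toMulEquiv A'map Amap AA' A'A
def βe : MulAut F4 := MonoidHom.toMulEquiv Cmap Bmap BC CB

def φs : F2 →* MulAut F4 := FreeGroup.lift ![αe, βe]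

def a : F2 := .of 0
def b : F2 := .of 1

@[simp] lemma φ_a (n : F4) : φs a n = A'map n := by rw [φs, a, FreeGroup.lift_apply_of]; rfl
@[simp] lemma φ_b (n : F4) : φs b n = Cmap n := by rw [φs, b, FreeGroup.lift_apply_of]; rfl
@[simp] lemma φ_a_inv (n : F4) : (φs a)⁻¹ n = Amap n := by rw [φs, a, FreeGroup.lift_apply_of]; rfl
@[simp] lemma φ_b_inv (n : F4) : (φs b)⁻¹ n = Bmap n := by rw [φs, b, FreeGroup.lift_apply_of]; rfl
@[simp] lemma φ_a_symm (n : F4) : (φs a).symm n = Amap n := φ_a_inv n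
@[simp] lemma φ_b_symm (n : F4) : (φs b).symm n = Bmap n := φ_b_inv n

abbrev Gsd := F4 ⋊[φs] F2

def C1 : GdL := .of 0
def C2 : GdL := .of 1
def C3 : GdL := .of 2
def C4 : GdL := .of 3
def L1 : GdL := .of 4
def L2 : GdL := .of 5
def Li : GdL := .of 6

def fgen : Fin 7 → Gsd
  | 0 => inl X
  | 1 => inl Y
  | 2 => inl Z
  | 3 => inl W
  | 4 => inr a
  | 5 => inr b
  | 6 => (inl (X*Y*Z*W) * inr a * inr b)⁻¹

@[simp] lemma fgen0 : fgen 0 = inl X := rfl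
@[simp] lemma fgen1 : fgen 1 = inl Y := rfl
@[simp] lemma fgen2 : fgen 2 = inl Z := rfl
@[simp] lemma fgen3 : fgen 3 = inl W := rfl
@[simp] lemma fgen4 : fgen 4 = inr a := rfl
@[simp] lemma fgen5 : fgen 5 = inr b := rfl
@[simp] lemma fgen6 : fgen 6 = (inl (X*Y*Z*W) * inr a * inr b)⁻¹ := rfl

lemma hrels : ∀ r ∈ GdLrels, FreeGroup.lift fgen r = 1 := by
  intro r hr
  simp only [GdLrels, Set.mem_insert_iff, Set.mem_singleton_iff] at hr
  rcases hr with rfl|rfl|rfl|rfl|rfl|rfl|rfl|rfl|rfl <;>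
  · refine SemidirectProduct.ext ?_ ?_ <;>
      simp [Amap, A'map, Bmap, Cmap, X, Y, Z, W] <;> group

def Φ : GdL →* Gsd := PresentedGroup.toGroup hrels

@[simp] lemma Φ_of (i : Fin 7) : Φ (.of i) = fgen i := PresentedGroup.toGroup.of hrels

def ι : F4 →* GdL := FreeGroup.lift ![C1, C2, C3, C4]
def lmap : F2 →* GdL := FreeGroup.lift ![L1, L2]

@[simp] lemma lmap_a : lmap a = L1 := by rw [lmap, a, FreeGroup.lift_apply_of]; rfl
@[simp] lemma lmap_b : lmap b = L2 := by rw [lmap, b, FreeGroup.lift_apply_of]; rfl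

lemma relmk {r : FreeGroup (Fin 7)} (h : r ∈ GdLrels) : PresentedGroup.mk GdLrels r = 1 :=
  (QuotientGroup.eq_one_iff r).mpr (Subgroup.subset_normalClosure h)

@[simp] lemma mk_of (i : Fin 7) :
    PresentedGroup.mk GdLrels (FreeGroup.of i) = PresentedGroup.of i := rfl

lemma R1 : L2 * C1 * L2⁻¹ = C1 := by
  have h := relmk (show (FreeGroup.of 5 * FreeGroup.of 0 * (FreeGroup.of 5)⁻¹ *
    (FreeGroup.of 0)⁻¹ : FreeGroup (Fin 7)) ∈ GdLrels by simp [GdLrels])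
  simp only [_root_.map_mul, _root_.map_inv, mk_of] at h
  exact mul_inv_eq_one.mp h

lemma R9 : C1 * C2 * C3 * C4 * L1 * L2 * Li = 1 := by
  have h := relmk (show (FreeGroup.of 0 * FreeGroup.of 1 * FreeGroup.of 2 * FreeGroup.of 3 *
    FreeGroup.of 4 * FreeGroup.of 5 * FreeGroup.of 6 : FreeGroup (Fin 7)) ∈ GdLrels by
      simp [GdLrels])
  simp only [_root_.map_mul, mk_of] at h
  exact h

lemma R2 : L2⁻¹ * C2 * L2 = (C2 * C3 * C4) * C3 * (C2 * C3 * C4)⁻¹ := by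
  have h := relmk (show ((FreeGroup.of 5)⁻¹ * FreeGroup.of 1 * FreeGroup.of 5 *
    ((FreeGroup.of 1 * FreeGroup.of 2 * FreeGroup.of 3) * FreeGroup.of 2 *
      (FreeGroup.of 1 * FreeGroup.of 2 * FreeGroup.of 3)⁻¹)⁻¹ : FreeGroup (Fin 7)) ∈ GdLrels by
        simp [GdLrels])
  simp only [_root_.map_mul, _root_.map_inv, mk_of] at h
  exact mul_inv_eq_one.mp h

lemma R3 : L2⁻¹ * C3 * L2 = (C2 * C3) * C4 * (C2 * C3)⁻¹ := by
  have h := relmk (show ((FreeGroup.of 5)⁻¹ * FreeGroup.of 2 * FreeGroup.of 5 *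
    ((FreeGroup.of 1 * FreeGroup.of 2) * FreeGroup.of 3 *
      (FreeGroup.of 1 * FreeGroup.of 2)⁻¹)⁻¹ : FreeGroup (Fin 7)) ∈ GdLrels by simp [GdLrels])
  simp only [_root_.map_mul, _root_.map_inv, mk_of] at h
  exact mul_inv_eq_one.mp h

lemma R4 : L2⁻¹ * C4 * L2 = C2 := by
  have h := relmk (show ((FreeGroup.of 5)⁻¹ * FreeGroup.of 3 * FreeGroup.of 5 *
    (FreeGroup.of 1)⁻¹ : FreeGroup (Fin 7)) ∈ GdLrels by simp [GdLrels])
  simp only [_root_.map_mul, _root_.map_inv, mk_of] at h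
  exact mul_inv_eq_one.mp h

lemma R5 : L1⁻¹ * C1 * L1 = (C1 * C2) * C3 * (C1 * C2)⁻¹ := by
  have h := relmk (show ((FreeGroup.of 4)⁻¹ * FreeGroup.of 0 * FreeGroup.of 4 *
    ((FreeGroup.of 0 * FreeGroup.of 1) * FreeGroup.of 2 *
      (FreeGroup.of 0 * FreeGroup.of 1)⁻¹)⁻¹ : FreeGroup (Fin 7)) ∈ GdLrels by simp [GdLrels])
  simp only [_root_.map_mul, _root_.map_inv, mk_of] at h
  exact mul_inv_eq_one.mp h

lemma R6 : L1⁻¹ * C2 * L1 = (C1 * C2) * C1 * (C1 * C2)⁻¹ := by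
  have h := relmk (show ((FreeGroup.of 4)⁻¹ * FreeGroup.of 1 * FreeGroup.of 4 *
    ((FreeGroup.of 0 * FreeGroup.of 1) * FreeGroup.of 0 *
      (FreeGroup.of 0 * FreeGroup.of 1)⁻¹)⁻¹ : FreeGroup (Fin 7)) ∈ GdLrels by simp [GdLrels])
  simp only [_root_.map_mul, _root_.map_inv, mk_of] at h
  exact mul_inv_eq_one.mp h

lemma R7 : L1⁻¹ * C3 * L1 = C1 * C2 * C1⁻¹ := by
  have h := relmk (show ((FreeGroup.of 4)⁻¹ * FreeGroup.of 2 * FreeGroup.of 4 *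
    (FreeGroup.of 0 * FreeGroup.of 1 * (FreeGroup.of 0)⁻¹)⁻¹ : FreeGroup (Fin 7)) ∈ GdLrels by
      simp [GdLrels])
  simp only [_root_.map_mul, _root_.map_inv, mk_of] at h
  exact mul_inv_eq_one.mp h

lemma R8 : L1 * C4 * L1⁻¹ = C4 := by
  have h := relmk (show (FreeGroup.of 4 * FreeGroup.of 3 * (FreeGroup.of 4)⁻¹ *
    (FreeGroup.of 3)⁻¹ : FreeGroup (Fin 7)) ∈ GdLrels by simp [GdLrels])
  simp only [_root_.map_mul, _root_.map_inv, mk_of] at h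
  exact mul_inv_eq_one.mp h

-- generator values
lemma Bmap_X : Bmap X = X := by rw [Bmap, X, FreeGroup.lift_apply_of]; rfl
lemma Bmap_Y : Bmap Y = (Y*Z*W)*Z*(Y*Z*W)⁻¹ := by rw [Bmap, Y, FreeGroup.lift_apply_of]; rfl
lemma Bmap_Z : Bmap Z = (Y*Z)*W*(Y*Z)⁻¹ := by rw [Bmap, Z, FreeGroup.lift_apply_of]; rfl
lemma Bmap_W : Bmap W = Y := by rw [Bmap, W, FreeGroup.lift_apply_of]; rfl
lemma Amap_X : Amap X = (X*Y)*Z*(X*Y)⁻¹ := by rw [Amap, X, FreeGroup.lift_apply_of]; rfl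
lemma Amap_Y : Amap Y = (X*Y)*X*(X*Y)⁻¹ := by rw [Amap, Y, FreeGroup.lift_apply_of]; rfl
lemma Amap_Z : Amap Z = X*Y*X⁻¹ := by rw [Amap, Z, FreeGroup.lift_apply_of]; rfl
lemma Amap_W : Amap W = W := by rw [Amap, W, FreeGroup.lift_apply_of]; rfl
lemma iota_X : ι X = C1 := by rw [ι, X, FreeGroup.lift_apply_of]; rfl
lemma iota_Y : ι Y = C2 := by rw [ι, Y, FreeGroup.lift_apply_of]; rfl
lemma iota_Z : ι Z = C3 := by rw [ι, Z, FreeGroup.lift_apply_of]; rfl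
lemma iota_W : ι W = C4 := by rw [ι, W, FreeGroup.lift_apply_of]; rfl

lemma hBconj : ∀ n : F4, L2 * ι (Bmap n) * L2⁻¹ = ι n := by
  have h1 : L2 * ι (Bmap X) * L2⁻¹ = ι X := by
    rw [Bmap_X, iota_X]; exact R1
  have h2 : L2 * ι (Bmap Y) * L2⁻¹ = ι Y := by
    have e : ι (Bmap Y) = (C2 * C3 * C4) * C3 * (C2 * C3 * C4)⁻¹ := by
      rw [Bmap_Y]
      simp only [_root_.map_mul, _root_.map_inv, iota_X, iota_Y, iota_Z, iota_W]
    rw [e, iota_Y, ← R2]; group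
  have h3 : L2 * ι (Bmap Z) * L2⁻¹ = ι Z := by
    have e : ι (Bmap Z) = (C2 * C3) * C4 * (C2 * C3)⁻¹ := by
      rw [Bmap_Z]
      simp only [_root_.map_mul, _root_.map_inv, iota_X, iota_Y, iota_Z, iota_W]
    rw [e, iota_Z, ← R3]; group
  have h4 : L2 * ι (Bmap W) * L2⁻¹ = ι W := by
    rw [Bmap_W, iota_Y, iota_W, ← R4]; group
  intro n
  induction n using FreeGroup.induction_on with
  | C1 => simp
  | of i =>
    fin_cases i
    · exact h1
    · exact h2
    · exact h3
    · exact h4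
  | inv_of i ih => simp only [_root_.map_inv]; rw [← ih]; group
  | mul x y hx hy => simp only [_root_.map_mul]; rw [← hx, ← hy]; group

lemma hAconj : ∀ n : F4, L1 * ι (Amap n) * L1⁻¹ = ι n := by
  have h1 : L1 * ι (Amap X) * L1⁻¹ = ι X := by
    have e : ι (Amap X) = (C1 * C2) * C3 * (C1 * C2)⁻¹ := by
      rw [Amap_X]; simp only [_root_.map_mul, _root_.map_inv, iota_X, iota_Y, iota_Z, iota_W]
    rw [e, iota_X, ← R5]; group
  have h2 : L1 * ι (Amap Y) * L1⁻¹ = ι Y := by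
    have e : ι (Amap Y) = (C1 * C2) * C1 * (C1 * C2)⁻¹ := by
      rw [Amap_Y]; simp only [_root_.map_mul, _root_.map_inv, iota_X, iota_Y, iota_Z, iota_W]
    rw [e, iota_Y, ← R6]; group
  have h3 : L1 * ι (Amap Z) * L1⁻¹ = ι Z := by
    have e : ι (Amap Z) = C1 * C2 * C1⁻¹ := by
      rw [Amap_Z]; simp only [_root_.map_mul, _root_.map_inv, iota_X, iota_Y, iota_Z, iota_W]
    rw [e, iota_Z, ← R7]; group
  have h4 : L1 * ι (Amap W) * L1⁻¹ = ι W := by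
    rw [Amap_W, iota_W]; exact R8
  intro n
  induction n using FreeGroup.induction_on with
  | C1 => simp
  | of i =>
    fin_cases i
    · exact h1
    · exact h2
    · exact h3
    · exact h4
  | inv_of i ih => simp only [_root_.map_inv]; rw [← ih]; group
  | mul x y hx hy => simp only [_root_.map_mul]; rw [← hx, ← hy]; group

lemma BCpt (n : F4) : Bmap (Cmap n) = n := by
  have := DFunLike.congr_fun BC n; simpa using this
lemma AA'pt (n : F4) : Amap (A'map n) = n := by
  have := DFunLike.congr_fun AA' n; simpa using this

lemma hCconj (n : F4) : ι (Cmap n) = L2 * ι n * L2⁻¹ := by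
  have := hBconj (Cmap n)
  rw [BCpt n] at this
  exact this.symm

lemma hA'conj (n : F4) : ι (A'map n) = L1 * ι n * L1⁻¹ := by
  have := hAconj (A'map n)
  rw [AA'pt n] at this
  exact this.symm

lemma hBconj' (n : F4) : ι (Bmap n) = L2⁻¹ * ι n * L2 := by
  rw [← hBconj n]; group

lemma hAconj' (n : F4) : ι (Amap n) = L1⁻¹ * ι n * L1 := by
  rw [← hAconj n]; group

lemma key : ∀ g : F2, ∀ n : F4, ι (φs g n) = lmap g * ι n * (lmap g)⁻¹ := by
  intro g
  induction g using FreeGroup.induction_on with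
  | C1 => intro n; simp
  | of i =>
    fin_cases i
    · intro n
      show ι (φs a n) = lmap a * ι n * (lmap a)⁻¹
      rw [φ_a, lmap_a]; exact hA'conj n
    · intro n
      show ι (φs b n) = lmap b * ι n * (lmap b)⁻¹
      rw [φ_b, lmap_b]; exact hCconj n
  | inv_of i ih =>
    intro n
    have h2 := ih ((φs (FreeGroup.of i))⁻¹ n)
    rw [MulAut.apply_inv_self] at h2
    rw [_root_.map_inv, _root_.map_inv, h2]; group
  | mul x y hx hy =>
    intro n
    rw [_root_.map_mul, _root_.map_mul, MulAut.mul_apply, hx, hy]; group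

lemma compat : ∀ g : F2,
    ι.comp (φs g).toMonoidHom = (MulAut.conj (lmap g)).toMonoidHom.comp ι := by
  intro g
  refine MonoidHom.ext fun n => ?_
  simpa using key g n

def Ψ : Gsd →* GdL := SemidirectProduct.lift ι lmap compat

lemma ΨΦ : Ψ.comp Φ = MonoidHom.id GdL := by
  apply PresentedGroup.ext
  intro i
  fin_cases i
  · show Ψ (Φ C1) = C1
    rw [show Φ C1 = fgen 0 from Φ_of 0, fgen0]
    simp [Ψ, iota_X]
  · show Ψ (Φ C2) = C2
    rw [show Φ C2 = fgen 1 from Φ_of 1, fgen1]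
    simp [Ψ, iota_Y]
  · show Ψ (Φ C3) = C3
    rw [show Φ C3 = fgen 2 from Φ_of 2, fgen2]
    simp [Ψ, iota_Z]
  · show Ψ (Φ C4) = C4
    rw [show Φ C4 = fgen 3 from Φ_of 3, fgen3]
    simp [Ψ, iota_W]
  · show Ψ (Φ L1) = L1
    rw [show Φ L1 = fgen 4 from Φ_of 4, fgen4]
    simp [Ψ]
  · show Ψ (Φ L2) = L2
    rw [show Φ L2 = fgen 5 from Φ_of 5, fgen5]
    simp [Ψ]
  · show Ψ (Φ Li) = Li
    rw [show Φ Li = fgen 6 from Φ_of 6, fgen6]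
    have : Ψ ((inl (X*Y*Z*W) * inr a * inr b)⁻¹) = (ι (X*Y*Z*W) * L1 * L2)⁻¹ := by
      simp [Ψ]
    rw [this]
    have e : ι (X*Y*Z*W) = C1 * C2 * C3 * C4 := by
      simp only [_root_.map_mul, iota_X, iota_Y, iota_Z, iota_W]
    rw [e]
    have h9 := eq_inv_of_mul_eq_one_right R9
    rw [h9]

lemma ΦΨ : Φ.comp Ψ = MonoidHom.id Gsd := by
  apply SemidirectProduct.hom_ext
  · apply FreeGroup.ext_hom
    intro i
    fin_cases i
    · show Φ (Ψ (inl X)) = inl X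
      rw [show Ψ (inl X) = ι X from by simp [Ψ], iota_X]
      exact Φ_of 0
    · show Φ (Ψ (inl Y)) = inl Y
      rw [show Ψ (inl Y) = ι Y from by simp [Ψ], iota_Y]
      exact Φ_of 1
    · show Φ (Ψ (inl Z)) = inl Z
      rw [show Ψ (inl Z) = ι Z from by simp [Ψ], iota_Z]
      exact Φ_of 2
    · show Φ (Ψ (inl W)) = inl W
      rw [show Ψ (inl W) = ι W from by simp [Ψ], iota_W]
      exact Φ_of 3
  · apply FreeGroup.ext_hom
    intro i
    fin_cases i
    · show Φ (Ψ (inr a)) = inr a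
      rw [show Ψ (inr a) = lmap a from by simp [Ψ], lmap_a]
      exact Φ_of 4
    · show Φ (Ψ (inr b)) = inr b
      rw [show Ψ (inr b) = lmap b from by simp [Ψ], lmap_b]
      exact Φ_of 5

def π : GdL →* F2 := SemidirectProduct.rightHom.comp Φ

@[simp] lemma π_of (k : Fin 7) : π (PresentedGroup.of k) = SemidirectProduct.rightHom (fgen k) := by
  rw [π, MonoidHom.comp_apply, show Φ (PresentedGroup.of k) = fgen k from Φ_of k]

lemma Φι (n : F4) : Φ (ι n) = inl n := by
  have h := DFunLike.congr_fun ΦΨ (inl n)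
  simpa [Ψ] using h

lemma ι_inj : Function.Injective ι := fun m n h => inl_injective (by rw [← Φι m, ← Φι n, h])

lemma mem_NdL (n : F4) : ι n ∈ NdL := by
  induction n using FreeGroup.induction_on with
  | C1 => simpa using one_mem NdL
  | of i =>
    fin_cases i
    · show ι (FreeGroup.of 0 : F4) ∈ NdL
      rw [show (FreeGroup.of 0 : F4) = X from rfl, iota_X]
      exact Subgroup.subset_normalClosure (by left; rfl)
    · show ι (FreeGroup.of 1 : F4) ∈ NdL
      rw [show (FreeGroup.of 1 : F4) = Y from rfl, iota_Y]
      exact Subgroup.subset_normalClosure (by right; left; rfl)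
    · show ι (FreeGroup.of 2 : F4) ∈ NdL
      rw [show (FreeGroup.of 2 : F4) = Z from rfl, iota_Z]
      exact Subgroup.subset_normalClosure (by right; right; left; rfl)
    · show ι (FreeGroup.of 3 : F4) ∈ NdL
      rw [show (FreeGroup.of 3 : F4) = W from rfl, iota_W]
      exact Subgroup.subset_normalClosure (by right; right; right; rfl)
  | inv_of i ih => rw [_root_.map_inv]; exact inv_mem ih
  | mul x y hx hy => rw [_root_.map_mul]; exact mul_mem hx hy

lemma NdL_le_ker : NdL ≤ π.ker := by
  apply Subgroup.normalClosure_le_normal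
  intro g hg
  rcases hg with rfl | rfl | rfl | rfl <;>
    simp [MonoidHom.mem_ker, fgen0, fgen1, fgen2, fgen3]

lemma ker_le_range : ∀ g : GdL, π g = 1 → ∃ n : F4, ι n = g := by
  intro g hg
  have hmem : Φ g ∈ (SemidirectProduct.rightHom : Gsd →* F2).ker := hg
  rw [← SemidirectProduct.range_inl_eq_ker_rightHom] at hmem
  obtain ⟨n, hn⟩ := hmem
  refine ⟨n, ?_⟩
  have h := DFunLike.congr_fun ΨΦ g
  simp only [MonoidHom.comp_apply, MonoidHom.id_apply] at h
  rw [← h, ← hn]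
  simp [Ψ]

lemma NdL_eq_ker : NdL = π.ker := by
  apply le_antisymm NdL_le_ker
  intro g hg
  obtain ⟨n, hn⟩ := ker_le_range g hg
  rw [← hn]; exact mem_NdL n

def qq : GdL ⧸ NdL →* F2 := QuotientGroup.lift NdL π (fun g hg => NdL_le_ker hg)
def jj : F2 →* GdL ⧸ NdL := (QuotientGroup.mk' NdL).comp lmap

@[simp] lemma mkq_C1 : (QuotientGroup.mk C1 : GdL ⧸ NdL) = 1 :=
  (QuotientGroup.eq_one_iff _).mpr (Subgroup.subset_normalClosure (by left; rfl))
@[simp] lemma mkq_C2 : (QuotientGroup.mk C2 : GdL ⧸ NdL) = 1 :=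
  (QuotientGroup.eq_one_iff _).mpr (Subgroup.subset_normalClosure (by right; left; rfl))
@[simp] lemma mkq_C3 : (QuotientGroup.mk C3 : GdL ⧸ NdL) = 1 :=
  (QuotientGroup.eq_one_iff _).mpr (Subgroup.subset_normalClosure (by right; right; left; rfl))
@[simp] lemma mkq_C4 : (QuotientGroup.mk C4 : GdL ⧸ NdL) = 1 :=
  (QuotientGroup.eq_one_iff _).mpr (Subgroup.subset_normalClosure (by right; right; right; rfl))

lemma qj : qq.comp jj = MonoidHom.id F2 := by
  apply FreeGroup.ext_hom
  intro i
  fin_cases i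
  · show qq (jj a) = a
    rw [jj, MonoidHom.comp_apply, lmap_a]
    show π L1 = a
    rw [show π L1 = SemidirectProduct.rightHom (fgen 4) from π_of 4, fgen4]
    simp
  · show qq (jj b) = b
    rw [jj, MonoidHom.comp_apply, lmap_b]
    show π L2 = b
    rw [show π L2 = SemidirectProduct.rightHom (fgen 5) from π_of 5, fgen5]
    simp

lemma jq : jj.comp qq = MonoidHom.id (GdL ⧸ NdL) := by
  apply QuotientGroup.monoidHom_ext
  apply PresentedGroup.ext
  intro i
  have base : ∀ k : Fin 7, ((jj.comp qq).comp (QuotientGroup.mk' NdL)) (PresentedGroup.of k)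
      = jj (π (PresentedGroup.of k)) := fun k => rfl
  fin_cases i <;>
    rw [base] <;>
    rw [π_of]
  · show jj (SemidirectProduct.rightHom (inl X)) = (QuotientGroup.mk' NdL) C1
    simp [jj]
  · show jj (SemidirectProduct.rightHom (inl Y)) = (QuotientGroup.mk' NdL) C2
    simp [jj]
  · show jj (SemidirectProduct.rightHom (inl Z)) = (QuotientGroup.mk' NdL) C3
    simp [jj]
  · show jj (SemidirectProduct.rightHom (inl W)) = (QuotientGroup.mk' NdL) C4
    simp [jj]
  · show jj (SemidirectProduct.rightHom (inr a)) = (QuotientGroup.mk' NdL) L1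
    simp [jj]
  · show jj (SemidirectProduct.rightHom (inr b)) = (QuotientGroup.mk' NdL) L2
    simp [jj]
  · show jj (SemidirectProduct.rightHom ((inl (X*Y*Z*W) * inr a * inr b)⁻¹))
      = (QuotientGroup.mk' NdL) Li
    have hLi : Li = (C1 * C2 * C3 * C4 * L1 * L2)⁻¹ := eq_inv_of_mul_eq_one_right R9
    rw [hLi]
    simp [jj, mul_assoc]

end GdLaux

open GdLaux in
theorem GdL_is_semidirect_product_F4_F2 :
    (∃ iso : FreeGroup (Fin 4) ≃* NdL,
      ∀ i : Fin 4, ((iso (FreeGroup.of i) : NdL) : GdL) = PresentedGroup.of ⟨i.val, by omega⟩) ∧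
    (∃ iso : FreeGroup (Fin 2) ≃* GdL ⧸ NdL,
      iso (FreeGroup.of 0) = QuotientGroup.mk (PresentedGroup.of 4) ∧
      iso (FreeGroup.of 1) = QuotientGroup.mk (PresentedGroup.of 5)) ∧
    (∃ s : GdL ⧸ NdL →* GdL, (QuotientGroup.mk' NdL).comp s = MonoidHom.id _) := by
  refine ⟨?_, ?_, ?_⟩
  · have hinj : Function.Injective (ι.codRestrict NdL mem_NdL) := by
      intro m n h
      apply ι_inj
      have := congrArg (Subtype.val) h
      simpa using this
    have hsurj : Function.Surjective (ι.codRestrict NdL mem_NdL) := by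
      rintro ⟨x, hx⟩
      have hx' : π x = 1 := NdL_le_ker hx
      obtain ⟨n, hn⟩ := ker_le_range x hx'
      exact ⟨n, Subtype.ext (by simpa using hn)⟩
    refine ⟨MulEquiv.ofBijective _ ⟨hinj, hsurj⟩, ?_⟩
    intro i
    fin_cases i
    · show ι X = C1
      exact iota_X
    · show ι Y = C2
      exact iota_Y
    · show ι Z = C3
      exact iota_Z
    · show ι W = C4
      exact iota_W
  · refine ⟨MonoidHom.toMulEquiv jj qq qj jq, ?_, ?_⟩
    · show (QuotientGroup.mk' NdL) (lmap a) = _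
      rw [lmap_a]
      rfl
    · show (QuotientGroup.mk' NdL) (lmap b) = _
      rw [lmap_b]
      rfl
  · exact ⟨lmap.comp qq, jq⟩
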